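/- arXiv:2508.21202 — 2 statements merged into one kernel-verified Lean document; each statement's English description precedes it below -/
import Mathlib

section
/- Let κ be an inaccessible cardinal. Then the Lévy collapse Col(ω,<κ) has the κ-chain condition; consequently every maximal antichain A of Col(ω,<κ) is contained in Col(ω,<α) for some α < κ. -/
/-- Conditions of the Lévy collapse `Col(ω,<κ)`: finite partial functions
`p : ω × κ ⇀ κ` with `p(n,α) < α` whenever defined, coded as finite functional sets of
triples `(n, α, β)` meaning `p(n,α) = β`.  The ordering is reverse inclusion, so `q` extends
`p` iff `p.1 ⊆ q.1`. -/
def LevyCond (κ : Ordinal.{0}) : Type 1 :=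
  {p : Set (ℕ × Ordinal × Ordinal) //
    p.Finite ∧ (∀ t ∈ p, t.2.2 < t.2.1 ∧ t.2.1 < κ) ∧
      ∀ t ∈ p, ∀ t' ∈ p, t.1 = t'.1 → t.2.1 = t'.2.1 → t = t'}

/-- Two Lévy collapse conditions are compatible iff they have a common extension. -/
def LevyCompat {κ : Ordinal.{0}} (p q : LevyCond κ) : Prop :=
  ∃ r : LevyCond κ, p.1 ⊆ r.1 ∧ q.1 ⊆ r.1

/-!
Given `κ` many conditions, the Δ-system lemma applied to their finite domains yields `κ` many
whose domains pairwise meet in one finite root `R`. The restrictions of conditions to `R` are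
finite sets of triples with all coordinates below some `α₀ < κ`, so there are fewer than `κ` of
them; two conditions with the same restriction to `R` agree on their common domain, and their
union is a common extension. For the second part, regularity of `κ` bounds the union of fewer
than `κ` finite domains below `κ`.
-/

open Cardinal Set

universe u

section DeltaSystem

variable {ι α : Type u} {c : Cardinal.{u}}

def IsDeltaSystem (f : ι → Set α) (I : Set ι) (R : Set α) : Prop :=
  I.Pairwise fun i j => f i ∩ f j = R

theorem exists_maximal_pairwiseDisjoint_subset (S : Set ι) (f : ι → Set α) :
    ∃ I, Maximal (fun I => I ⊆ S ∧ I.PairwiseDisjoint f) I :=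
  zorn_subset _ fun C hCS hC =>
    ⟨⋃₀ C, ⟨sUnion_subset fun _ hI => (hCS hI).1,
      (pairwiseDisjoint_sUnion hC.directedOn).2 fun _ hI => (hCS hI).2⟩,
      fun _ => subset_sUnion_of_mem⟩

theorem exists_pairwiseDisjoint_of_forall_mk_lt (hc : c.IsRegular) {f : ι → Set α}
    {S : Set ι} (hf : ∀ i ∈ S, (f i).Finite) (hS : c ≤ #S)
    (hsmall : ∀ a, #{i ∈ S | a ∈ f i} < c) :
    ∃ I ⊆ S, c ≤ #I ∧ I.PairwiseDisjoint f := by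
  obtain ⟨I, ⟨hIS, hI⟩, hmax⟩ := exists_maximal_pairwiseDisjoint_subset S f
  refine ⟨I, hIS, not_lt.1 fun hIc => hS.not_gt ?_, hI⟩
  set U := ⋃ i ∈ I, f i
  set T := ⋃ a ∈ U, {j ∈ S | a ∈ f j}
  have hU : #U < c :=
    (card_biUnion_lt_iff_forall_of_isRegular hc hIc).2 fun i hi =>
      (hf i (hIS hi)).lt_aleph0.trans_le hc.aleph0_le
  -- by maximality of `I`, every `f j` with `j ∈ S \ I` meets `U`
  have hcover : S ⊆ I ∪ T := by
    intro j hj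
    by_cases hjI : j ∈ I
    · exact Or.inl hjI
    by_contra hout
    refine hjI (hmax ⟨insert_subset hj hIS, hI.insert fun i hi _ =>
      disjoint_left.2 fun a haj hai => hout (Or.inr ?_)⟩ (subset_insert j I) (mem_insert j I))
    exact mem_biUnion (mem_biUnion hi hai) ⟨hj, haj⟩
  calc #S ≤ #↥(I ∪ T) := mk_le_mk_of_subset hcover
    _ ≤ #I + #T := mk_union_le _ _
    _ < c := add_lt_of_lt hc.aleph0_le hIc
        ((card_biUnion_lt_iff_forall_of_isRegular hc hU).2 fun a _ => hsmall a)

theorem exists_isDeltaSystem_of_ncard_le (hc : c.IsRegular) (n : ℕ) {f : ι → Set α}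
    {S : Set ι} (hf : ∀ i ∈ S, (f i).Finite ∧ (f i).ncard ≤ n) (hS : c ≤ #S) :
    ∃ I ⊆ S, c ≤ #I ∧ ∃ R, IsDeltaSystem f I R := by
  induction n generalizing f S with
  | zero =>
    refine ⟨S, subset_rfl, hS, ∅, fun i hi j _ _ => ?_⟩
    show f i ∩ f j = ∅
    rw [(ncard_eq_zero (hf i hi).1).1 (Nat.le_zero.1 (hf i hi).2), empty_inter]
  | succ n ih =>
    by_cases hbig : ∃ a, c ≤ #{i ∈ S | a ∈ f i}
    · -- remove a point `a` common to `c` many sets and put it back into the root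
      obtain ⟨a, ha⟩ := hbig
      have hf' : ∀ i ∈ {i ∈ S | a ∈ f i}, (f i \ {a}).Finite ∧ (f i \ {a}).ncard ≤ n := by
        intro i hi
        refine ⟨(hf i hi.1).1.sdiff, ?_⟩
        rw [ncard_sdiff_singleton_of_mem hi.2]
        exact Nat.sub_le_of_le_add (hf i hi.1).2
      obtain ⟨I, hIS, hI, R, hR⟩ := ih hf' ha
      refine ⟨I, fun i hi => (hIS hi).1, hI, insert a R, fun i hi j hj hij => ?_⟩
      show f i ∩ f j = insert a R
      rw [← hR hi hj hij, insert_inter_distrib, insert_sdiff_singleton, insert_sdiff_singleton,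
        insert_eq_of_mem (hIS hi).2, insert_eq_of_mem (hIS hj).2]
    · push Not at hbig
      obtain ⟨I, hIS, hI, hdisj⟩ :=
        exists_pairwiseDisjoint_of_forall_mk_lt hc (fun i hi => (hf i hi).1) hS hbig
      exact ⟨I, hIS, hI, ∅, fun i hi j hj hij => (hdisj hi hj hij).inter_eq⟩

/-- The Δ-system lemma. -/
theorem exists_isDeltaSystem (hc : c.IsRegular) (hc' : ℵ₀ < c) {f : ι → Set α}
    {S : Set ι} (hf : ∀ i ∈ S, (f i).Finite) (hS : c ≤ #S) :
    ∃ I ⊆ S, c ≤ #I ∧ ∃ R, IsDeltaSystem f I R := by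
  obtain ⟨n, T, hTS, hT, hTn⟩ := infinite_pigeonhole_set
    (fun i : S => ULift.up.{u} (f i).ncard) c hS hc.aleph0_le (by simpa [hc.cof_ord] using hc')
  obtain ⟨I, hIT, hI, hR⟩ := exists_isDeltaSystem_of_ncard_le hc n.down (S := T)
    (fun i hi => ⟨hf i (hTS hi), (congrArg ULift.down (hTn hi)).le⟩) hT
  exact ⟨I, hIT.trans hTS, hI, hR⟩

end DeltaSystem

theorem mk_setOf_finite_subset_lt {β : Type u} {c : Cardinal.{u}} (hc : ℵ₀ < c) {X : Set β}
    (hX : #X < c) : #{s : Set β | s.Finite ∧ s ⊆ X} < c := by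
  classical
  have hinj : Function.Injective fun s : {s : Set β | s.Finite ∧ s ⊆ X} =>
      ((s.2.1.preimage Subtype.val_injective.injOn).toFinset : Finset X) := by
    rintro ⟨s, hs, hsX⟩ ⟨t, ht, htX⟩ h
    simp only [Finite.toFinset_inj] at h
    rw [Subtype.mk.injEq, ← inter_eq_right.2 hsX, ← inter_eq_right.2 htX,
      ← Subtype.image_preimage_coe, ← Subtype.image_preimage_coe, h]
  calc #{s : Set β | s.Finite ∧ s ⊆ X} ≤ #(Finset X) := mk_le_of_injective hinj
    _ ≤ #(List X) := mk_le_of_surjective List.toFinset_surjective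
    _ ≤ max ℵ₀ #X := mk_list_le_max X
    _ < c := max_lt hc hX

theorem exists_lt_ord_forall_lt_of_mk_lt {c : Cardinal.{u}} (hc : c.IsRegular)
    {s : Set Ordinal.{u}} (hs : #s < lift.{u + 1} c) (hsc : ∀ x ∈ s, x < c.ord) :
    ∃ a < c.ord, ∀ x ∈ s, x < a := by
  refine ⟨_, Ordinal.sSup_add_one_lt_of_lt_cof ?_ hsc, fun x hx =>
    (lt_add_one x).trans_le (le_csSup ⟨c.ord, ?_⟩ (mem_image_of_mem _ hx))⟩
  · rwa [← Ordinal.lift_cof, hc.cof_ord]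
  · rintro _ ⟨y, hy, rfl⟩
    exact Order.add_one_le_of_lt (hsc y hy)

namespace LevyCond

variable {κ : Ordinal.{0}}

def dom (p : LevyCond κ) : Set (ℕ × Ordinal) :=
  (fun t => (t.1, t.2.1)) '' p.1

def restrict (p : LevyCond κ) (R : Set (ℕ × Ordinal)) : Set (ℕ × Ordinal × Ordinal) :=
  {t ∈ p.1 | (t.1, t.2.1) ∈ R}

theorem finite_dom (p : LevyCond κ) : p.dom.Finite :=
  p.2.1.image _

theorem lt_of_mem_dom {p : LevyCond κ} {x : ℕ × Ordinal} (hx : x ∈ p.dom) : x.2 < κ := by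
  obtain ⟨t, ht, rfl⟩ := hx
  exact (p.2.2.1 t ht).2

theorem levyCompat_of_agree {p q : LevyCond κ}
    (h : ∀ t ∈ p.1, ∀ t' ∈ q.1, t.1 = t'.1 → t.2.1 = t'.2.1 → t = t') : LevyCompat p q := by
  refine ⟨⟨p.1 ∪ q.1, p.2.1.union q.2.1, ?_, ?_⟩, subset_union_left, subset_union_right⟩
  · rintro t (ht | ht)
    exacts [p.2.2.1 t ht, q.2.2.1 t ht]
  · rintro t (ht | ht) t' (ht' | ht') h₁ h₂
    exacts [p.2.2.2 t ht t' ht' h₁ h₂, h t ht t' ht' h₁ h₂, (h t' ht' t ht h₁.symm h₂.symm).symm,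
      q.2.2.2 t ht t' ht' h₁ h₂]

theorem levyCompat_of_restrict_eq {p q : LevyCond κ} {R : Set (ℕ × Ordinal)}
    (hR : p.dom ∩ q.dom ⊆ R) (h : p.restrict R = q.restrict R) : LevyCompat p q := by
  refine levyCompat_of_agree fun t ht t' ht' h₁ h₂ => ?_
  have htR : (t.1, t.2.1) ∈ R := hR ⟨⟨t, ht, rfl⟩, t', ht', by rw [h₁, h₂]⟩
  have htq : t ∈ q.restrict R := h ▸ ⟨ht, htR⟩
  exact q.2.2.2 t htq.1 t' ht' h₁ h₂

theorem mk_range_restrict_lt {c : Cardinal.{0}} (hc : c.IsRegular) (hc' : ℵ₀ < c)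
    {R : Set (ℕ × Ordinal)} (hR : R.Finite) (hRc : ∀ x ∈ R, x.2 < c.ord) :
    #(range fun p : LevyCond c.ord => p.restrict R) < lift.{1} c := by
  obtain ⟨α₀, hα₀, hbound⟩ := exists_lt_ord_forall_lt_of_mk_lt hc (s := Prod.snd '' R)
    ((hR.image _).lt_aleph0.trans (aleph0_lt_lift.2 hc')) (by
      rintro _ ⟨x, hx, rfl⟩
      exact hRc x hx)
  set X : Set (ℕ × Ordinal × Ordinal) := {t | (t.1, t.2.1) ∈ R ∧ t.2.2 < α₀}
  have hX : #X < lift.{1} c := by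
    have hinj : Function.Injective fun t : X =>
        ((⟨(t.1.1, t.1.2.1), t.2.1⟩, ⟨t.1.2.2, t.2.2⟩) : R × Iio α₀) := by
      rintro ⟨⟨n, β, γ⟩, _⟩ ⟨⟨n', β', γ'⟩, _⟩ h
      simp only [Prod.mk.injEq, Subtype.mk.injEq] at h ⊢
      exact ⟨h.1.1, h.1.2, congrArg Subtype.val h.2⟩
    calc #X ≤ #(R × Iio α₀) := mk_le_of_injective hinj
      _ = #R * lift.{1} α₀.card := by rw [mk_prod, mk_Iio_ordinal, lift_id, lift_id]
      _ < lift.{1} c := mul_lt_of_lt (aleph0_lt_lift.2 hc').le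
          (hR.lt_aleph0.trans (aleph0_lt_lift.2 hc')) (lift_lt.2 (lt_ord.1 hα₀))
  refine (mk_le_mk_of_subset ?_).trans_lt (mk_setOf_finite_subset_lt (aleph0_lt_lift.2 hc') hX)
  rintro _ ⟨p, rfl⟩
  refine ⟨p.2.1.subset fun t ht => ht.1, fun t ht => ⟨ht.2, ?_⟩⟩
  exact (p.2.2.1 t ht.1).1.trans (hbound _ (mem_image_of_mem _ ht.2))

theorem mk_antichain_lt {c : Cardinal.{0}} (hc : c.IsRegular) (hc' : ℵ₀ < c)
    {A : Set (LevyCond c.ord)} (hA : A.Pairwise fun p q => ¬ LevyCompat p q) :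
    #A < lift.{1} c := by
  by_contra! hbig
  obtain ⟨I, hIA, hI, R, hR⟩ := exists_isDeltaSystem hc.lift (aleph0_lt_lift.2 hc')
    (f := dom) (fun p _ => p.finite_dom) hbig
  obtain ⟨p₀, hp₀, q₀, hq₀, hpq₀⟩ : I.Nontrivial :=
    nontrivial_coe_sort.1 (one_lt_iff_nontrivial.1
      ((one_lt_aleph0.trans (aleph0_lt_lift.2 hc')).trans_le hI))
  have hRdom : R ⊆ p₀.dom := hR hp₀ hq₀ hpq₀ ▸ inter_subset_left
  -- fewer than `c` restrictions to the root, so two members of the Δ-system agree on it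
  obtain ⟨p, hp, q, hq, hpq, hres⟩ : ∃ p ∈ I, ∃ q ∈ I, p ≠ q ∧ p.restrict R = q.restrict R := by
    by_contra! h
    have hinj : InjOn (restrict · R) I := fun p hp q hq e =>
      by_contra fun hne => h p hp q hq hne e
    refine (mk_range_restrict_lt hc hc' (p₀.finite_dom.subset hRdom)
      fun x hx => lt_of_mem_dom (hRdom hx)).not_ge (hI.trans ?_)
    rw [← mk_image_eq_of_injOn _ _ hinj]
    exact mk_le_mk_of_subset (image_subset_range _ _)
  exact hA (hIA hp) (hIA hq) hpq (levyCompat_of_restrict_eq (hR hp hq hpq).le hres)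

theorem exists_lt_ord_bound_dom_of_mk_lt {c : Cardinal.{0}} (hc : c.IsRegular)
    {A : Set (LevyCond c.ord)} (hA : #A < lift.{1} c) :
    ∃ α < c.ord, ∀ p ∈ A, ∀ t ∈ p.1, t.2.1 < α := by
  obtain ⟨α, hα, hbound⟩ := exists_lt_ord_forall_lt_of_mk_lt hc
    (s := ⋃ p ∈ A, Prod.snd '' p.dom)
    ((card_biUnion_lt_iff_forall_of_isRegular hc.lift hA).2 fun p _ =>
      (p.finite_dom.image _).lt_aleph0.trans_le hc.lift.aleph0_le)
    (by
      simp only [mem_iUnion, mem_image]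
      rintro _ ⟨p, -, x, hx, rfl⟩
      exact lt_of_mem_dom hx)
  exact ⟨α, hα, fun p hp t ht => hbound _ (mem_biUnion hp ⟨_, ⟨t, ht, rfl⟩, rfl⟩)⟩

end LevyCond

/-- If `κ` is (strongly) inaccessible then the Lévy collapse `Col(ω,<κ)` has
the `κ`-chain condition: every antichain has size `< κ`.  Consequently every maximal
antichain `A` is contained in `Col(ω,<α)` for some `α < κ`, i.e. all ordinals appearing in
the domains of conditions in `A` are bounded by some `α < κ`. -/
theorem levy_collapse_kappa_cc (κ : Cardinal.{0}) (hκ : κ.IsInaccessible) :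
    (∀ A : Set (LevyCond κ.ord),
      (∀ p ∈ A, ∀ q ∈ A, p ≠ q → ¬ LevyCompat p q) →
        Cardinal.mk A < Cardinal.lift.{1,0} κ) ∧
    (∀ A : Set (LevyCond κ.ord),
      (∀ p ∈ A, ∀ q ∈ A, p ≠ q → ¬ LevyCompat p q) →
      (∀ p : LevyCond κ.ord, ∃ q ∈ A, LevyCompat p q) →
        ∃ α < κ.ord, ∀ p ∈ A, ∀ t ∈ p.1, t.2.1 < α) :=
  ⟨fun _ hA => LevyCond.mk_antichain_lt hκ.isRegular hκ.aleph0_lt hA,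
    fun _ hA _ => LevyCond.exists_lt_ord_bound_dom_of_mk_lt hκ.isRegular
      (LevyCond.mk_antichain_lt hκ.isRegular hκ.aleph0_lt hA)⟩
end

section
/- Let T be a theory containing ZFC⁻_count(∈₀,∈₁)-style internal categoricity: in any model A of T with two membership reducts, the reducts ⟨A,∈₀⟩ and ⟨A,∈₁⟩ are isomorphic via an A-definable map. Then any two definitionally equivalent (definitionally mergeable) extensions T₀ (in ∈₀) and T₁ (in ∈₁) of the base theory have the same deductive closure: T₀ ⊢ φ iff T₁ ⊢ φ* for the translation, hence as ∈-theories they prove the same sentences. -/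
open FirstOrder

/-- The relation symbols of the language with a single binary relation. -/
inductive memRel₁ : ℕ → Type
  | mem : memRel₁ 2

/-- The language with a single binary relation symbol (the language of set theory). -/
def L₁ : FirstOrder.Language := ⟨fun _ => Empty, memRel₁⟩

/-- The relation symbols of the language with two binary relations `∈₀` and `∈₁`. -/
inductive memRel₂ : ℕ → Type
  | mem₀ : memRel₂ 2
  | mem₁ : memRel₂ 2

/-- The language with two binary relation symbols `∈₀` and `∈₁`. -/
def L₂ : FirstOrder.Language := ⟨fun _ => Empty, memRel₂⟩

/-- The translation of the one-membership language sending `∈` to `∈₀`. -/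
def toMem₀ : L₁ →ᴸ L₂ where
  onFunction := fun {_} f => f
  onRelation := fun {_} r => match r with | .mem => memRel₂.mem₀

/-- The translation of the one-membership language sending `∈` to `∈₁`. -/
def toMem₁ : L₁ →ᴸ L₂ where
  onFunction := fun {_} f => f
  onRelation := fun {_} r => match r with | .mem => memRel₂.mem₁

lemma mem_sentence_iff (U : L₂.Theory)
    (hiso : ∀ (A : Type) [L₂.Structure A] [Nonempty A], A ⊨ U →
      Nonempty (@FirstOrder.Language.Equiv L₁ A A (toMem₀.reduct A) (toMem₁.reduct A)))
    (M : Type) [L₂.Structure M] [Nonempty M] (hM : M ⊨ U) (φ : L₁.Sentence) :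
    M ⊨ toMem₀.onSentence φ ↔ M ⊨ toMem₁.onSentence φ := by
  obtain ⟨g⟩ := hiso M hM
  letI S₀ := toMem₀.reduct M
  letI S₁ := toMem₁.reduct M
  rw [@Language.LHom.realize_onSentence L₁ L₂ M S₀ _ toMem₀
        (Language.LHom.isExpansionOn_reduct toMem₀ M) φ,
      @Language.LHom.realize_onSentence L₁ L₂ M S₁ _ toMem₁
        (Language.LHom.isExpansionOn_reduct toMem₁ M) φ]
  exact @Language.StrongHomClass.realize_sentence L₁ M M S₀ S₁ _ _ _ g φ

/-- Suppose `T₀` (formulated with `∈₀`) and `T₁` (formulated with `∈₁`) are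
definitionally mergeable extensions of an internally categorical base theory: there is a
common definitional expansion `U` in the two-membership language, i.e. `U` contains the
translations of `T₀` and of `T₁` and is conservative over each of them, and in every model
of `U` the two membership reducts are isomorphic (internal categoricity).  Then `T₀` and
`T₁` have the same deductive closure: they entail the same sentences (under the respective
translations into the common language). -/
theorem definitionally_equivalent_extensions_same_theory
    (T₀ T₁ : L₁.Theory) (U : L₂.Theory)
    (hext₀ : toMem₀.onTheory T₀ ⊆ U) (hext₁ : toMem₁.onTheory T₁ ⊆ U)
    (hconsv₀ : ∀ φ : L₁.Sentence, (U ⊨ᵇ toMem₀.onSentence φ) ↔ (T₀ ⊨ᵇ φ))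
    (hconsv₁ : ∀ φ : L₁.Sentence, (U ⊨ᵇ toMem₁.onSentence φ) ↔ (T₁ ⊨ᵇ φ))
    (hiso : ∀ (A : Type) [L₂.Structure A] [Nonempty A], A ⊨ U →
      Nonempty (@FirstOrder.Language.Equiv L₁ A A (toMem₀.reduct A) (toMem₁.reduct A))) :
    ∀ φ : L₁.Sentence, (T₀ ⊨ᵇ φ) ↔ (T₁ ⊨ᵇ φ) := by
  intro φ
  rw [← hconsv₀ φ, ← hconsv₁ φ]
  constructor <;> intro h <;> rw [Language.Theory.models_sentence_iff] at h ⊢ <;> intro M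
  · exact (mem_sentence_iff U hiso M M.is_model φ).1 (h M)
  · exact (mem_sentence_iff U hiso M M.is_model φ).2 (h M)
end
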